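/- Let ε ∈ [0,1) and let k ≥ 1 be an integer. For every fixed (δ₁,…,δ_{k−1}) ∈ [0,1]^{k−1}: (i) the partial derivative ∂R_ε/∂δ₀ (δ₀, δ₁,…,δ_{k−1}) tends to +∞ as δ₀ → 0⁺; and (ii) ∂R_ε/∂δ₀ evaluated at δ₀ = 1/2 is strictly negative. -/

import Mathlib

/-! Splitting off `δ₀`, `R_ε = (ε̄ H₂(δ₀) + ε̄ N δ₀) / (1 + ε̄ D δ₀)`, where `N` and `D` are the
numerator and denominator of `R_ε` at the shifted tail `(δ₁, δ₂, …)`. The `δ₀`-derivative of this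
ratio is `ε̄ H₂'(δ₀) / (1 + ε̄ D δ₀)` plus a term that stays bounded near `0`, and
`H₂'(δ₀) = log₂ ((1 - δ₀) / δ₀) → ∞` as `δ₀ → 0⁺`. At `δ₀ = 1/2` we have `H₂' = 0` and `H₂ = 1`,
so the derivative has the sign of `N - ε̄ D`; that `N < ε̄ D` follows by induction on `k` from
`H₂ ≤ 1`, strictly because `H₂(0) = 0`. -/

/-- The binary entropy function (base 2), with `H2 0 = H2 1 = 0`. -/
noncomputable def H2 (x : ℝ) : ℝ := -(x * Real.logb 2 x) - (1 - x) * Real.logb 2 (1 - x)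

/-- The function `R_ε(δ₀,…,δ_{k−1})`. -/
noncomputable def Rfun (ε : ℝ) (k : ℕ) (δ : ℕ → ℝ) : ℝ :=
  (∑ i ∈ Finset.range k, (1 - ε) ^ (i + 1) * H2 (δ i) * ∏ m ∈ Finset.range i, δ m) /
  (1 + ∑ i ∈ Finset.range k, (1 - ε) ^ (i + 1) * ∏ m ∈ Finset.range (i + 1), δ m)

open Real Filter Topology Finset

lemma H2_eq_binEntropy_div (x : ℝ) : H2 x = binEntropy x / log 2 := by
  simp only [H2, binEntropy, logb, log_inv]
  ring

lemma H2_zero : H2 0 = 0 := by simp [H2]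

lemma H2_half : H2 (1 / 2) = 1 := by
  rw [H2_eq_binEntropy_div, one_div, binEntropy_two_inv, div_self (log_pos one_lt_two).ne']

lemma H2_le_one (x : ℝ) : H2 x ≤ 1 := by
  rw [H2_eq_binEntropy_div, div_le_one (log_pos one_lt_two)]
  exact binEntropy_le_log_two

@[fun_prop]
lemma continuous_H2 : Continuous H2 := by
  simpa only [funext H2_eq_binEntropy_div] using binEntropy_continuous.div_const (log 2)

lemma deriv_H2 (x : ℝ) : deriv H2 x = (log (1 - x) - log x) / log 2 := by
  rw [funext H2_eq_binEntropy_div, deriv_div_const, deriv_binEntropy]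

lemma hasDerivAt_H2 {x : ℝ} (h0 : x ≠ 0) (h1 : x ≠ 1) : HasDerivAt H2 (deriv H2 x) x := by
  rw [funext H2_eq_binEntropy_div]
  exact ((differentiableAt_binEntropy h0 h1).div_const _).hasDerivAt

lemma deriv_H2_half : deriv H2 (1 / 2) = 0 := by
  norm_num [deriv_H2]

lemma tendsto_deriv_H2_nhdsGT_zero : Tendsto (deriv H2) (𝓝[>] 0) atTop := by
  simp only [funext deriv_H2, sub_eq_add_neg]
  have h_one_sub : Tendsto (fun t : ℝ => log (1 - t)) (𝓝[>] 0) (𝓝 0) := by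
    have : ContinuousAt (fun t : ℝ => log (1 - t)) 0 :=
      (continuousAt_log (by norm_num)).comp (by fun_prop)
    simpa using this.tendsto.mono_left nhdsWithin_le_nhds
  have h_neg_log : Tendsto (fun t : ℝ => -log t) (𝓝[>] 0) atTop :=
    tendsto_neg_atBot_atTop.comp tendsto_log_nhdsGT_zero
  exact (h_one_sub.add_atTop h_neg_log).atTop_div_const (log_pos one_lt_two)

section EntropyRatio

variable (c a b : ℝ)

lemma hasDerivAt_H2_ratio {t : ℝ} (h0 : t ≠ 0) (h1 : t ≠ 1) (hb : 1 + b * t ≠ 0) :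
    HasDerivAt (fun s => (c * H2 s + a * s) / (1 + b * s))
      (c * deriv H2 t / (1 + b * t) + (a - c * b * H2 t) / (1 + b * t) ^ 2) t := by
  have hnum : HasDerivAt (fun s => c * H2 s + a * s) (c * deriv H2 t + a) t := by
    have h := ((hasDerivAt_H2 h0 h1).const_mul c).add ((hasDerivAt_id' t).const_mul a)
    rwa [mul_one] at h
  have hden : HasDerivAt (fun s => 1 + b * s) b t := by
    have h := ((hasDerivAt_id' t).const_mul b).const_add 1
    rwa [mul_one] at h
  refine (hnum.div hden hb).congr_deriv ?_
  field_simp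
  ring

lemma tendsto_deriv_H2_ratio_nhdsGT_zero (hc : 0 < c) :
    Tendsto (deriv fun s => (c * H2 s + a * s) / (1 + b * s)) (𝓝[>] 0) atTop := by
  have hden : ∀ᶠ t in 𝓝[>] (0 : ℝ), 1 + b * t ≠ 0 :=
    nhdsWithin_le_nhds <| ContinuousAt.eventually_ne (by fun_prop) (by simp)
  have hderiv : ∀ᶠ t in 𝓝[>] (0 : ℝ), c * deriv H2 t * (1 + b * t)⁻¹ +
      (a - c * b * H2 t) / (1 + b * t) ^ 2 = deriv (fun s => (c * H2 s + a * s) / (1 + b * s)) t := by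
    filter_upwards [hden, self_mem_nhdsWithin, nhdsWithin_le_nhds (Iio_mem_nhds one_pos)]
      with t hb (h0 : 0 < t) (h1 : t < 1)
    exact ((hasDerivAt_H2_ratio c a b h0.ne' h1.ne hb).deriv).symm
  refine Tendsto.congr' hderiv (Tendsto.atTop_add (C := a) ?_ ?_)
  · refine ((tendsto_deriv_H2_nhdsGT_zero).const_mul_atTop hc).atTop_mul_pos one_pos ?_
    have : ContinuousAt (fun t => (1 + b * t)⁻¹) 0 := ContinuousAt.inv₀ (by fun_prop) (by simp)
    simpa using this.tendsto.mono_left nhdsWithin_le_nhds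
  · have : ContinuousAt (fun t => (a - c * b * H2 t) / (1 + b * t) ^ 2) 0 :=
      ContinuousAt.div (by fun_prop) (by fun_prop) (by simp)
    simpa [H2_zero] using this.tendsto.mono_left nhdsWithin_le_nhds

lemma deriv_H2_ratio_half (hb : 1 + b / 2 ≠ 0) :
    deriv (fun s => (c * H2 s + a * s) / (1 + b * s)) (1 / 2) = (a - c * b) / (1 + b / 2) ^ 2 := by
  rw [(hasDerivAt_H2_ratio c a b (by norm_num) (by norm_num) (by simpa [div_eq_mul_inv] using hb)).deriv,
    deriv_H2_half, H2_half]
  ring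

end EntropyRatio

section RecursiveStructure

variable (ε : ℝ)

noncomputable def Rnum (k : ℕ) (δ : ℕ → ℝ) : ℝ :=
  ∑ i ∈ range k, (1 - ε) ^ (i + 1) * H2 (δ i) * ∏ m ∈ range i, δ m

noncomputable def Rden (k : ℕ) (δ : ℕ → ℝ) : ℝ :=
  1 + ∑ i ∈ range k, (1 - ε) ^ (i + 1) * ∏ m ∈ range (i + 1), δ m

lemma Rfun_eq_Rnum_div_Rden (k : ℕ) (δ : ℕ → ℝ) : Rfun ε k δ = Rnum ε k δ / Rden ε k δ := rfl

lemma Rnum_succ (k : ℕ) (δ : ℕ → ℝ) :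
    Rnum ε (k + 1) δ = (1 - ε) * H2 (δ 0) + (1 - ε) * δ 0 * Rnum ε k (fun i => δ (i + 1)) := by
  simp only [Rnum, sum_range_succ' _ k, prod_range_succ', mul_sum]
  rw [add_comm]
  congr 1
  · simp
  · exact sum_congr rfl fun i _ => by ring

lemma Rden_succ (k : ℕ) (δ : ℕ → ℝ) :
    Rden ε (k + 1) δ = 1 + (1 - ε) * δ 0 * Rden ε k (fun i => δ (i + 1)) := by
  simp only [Rden, sum_range_succ' _ k, prod_range_succ' _ (_ + 1), mul_add, mul_sum]
  rw [add_comm (∑ i ∈ range k, _)]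
  congr 2
  · simp
  · exact sum_congr rfl fun i _ => by ring

lemma one_le_Rden {k : ℕ} {δ : ℕ → ℝ} (he : 0 ≤ 1 - ε) (hδ : ∀ i < k, 0 ≤ δ i) :
    1 ≤ Rden ε k δ := by
  refine le_add_of_nonneg_right (sum_nonneg fun i hi => mul_nonneg (pow_nonneg he _) ?_)
  exact prod_nonneg fun m hm => hδ m (by simp at hi hm; omega)

lemma Rnum_lt_mul_Rden {k : ℕ} {δ : ℕ → ℝ} (he : 0 < 1 - ε) (hδ : ∀ i < k, δ i ∈ Set.Icc 0 1) :
    Rnum ε k δ < (1 - ε) * Rden ε k δ := by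
  induction k generalizing δ with
  | zero => simpa [Rnum, Rden] using he
  | succ k ih =>
    rw [Rnum_succ, Rden_succ, mul_add, mul_one]
    have hH2 := mul_le_mul_of_nonneg_left (H2_le_one (δ 0)) he.le
    rcases (hδ 0 k.succ_pos).1.eq_or_lt with h0 | h0
    · simp [← h0, H2_zero, he]
    · have := ih (δ := fun i => δ (i + 1)) fun i hi => hδ (i + 1) (by omega)
      have := mul_lt_mul_of_pos_left this (mul_pos he h0)
      nlinarith

lemma Rfun_succ_update_zero (k : ℕ) (δ : ℕ → ℝ) (s : ℝ) :
    Rfun ε (k + 1) (Function.update δ 0 s) =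
      ((1 - ε) * H2 s + (1 - ε) * Rnum ε k (fun i => δ (i + 1)) * s) /
        (1 + (1 - ε) * Rden ε k (fun i => δ (i + 1)) * s) := by
  have hshift : (fun i => Function.update δ 0 s (i + 1)) = fun i => δ (i + 1) :=
    funext fun i => Function.update_of_ne i.succ_ne_zero s δ
  rw [Rfun_eq_Rnum_div_Rden, Rnum_succ, Rden_succ, hshift, Function.update_self]
  ring

end RecursiveStructure

/-- Let `ε ∈ [0,1)` and `k ≥ 1`.  For every fixed `(δ₁,…,δ_{k−1}) ∈ [0,1]^{k−1}`:
(i) `∂R_ε/∂δ₀` tends to `+∞` as `δ₀ → 0⁺`; and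
(ii) `∂R_ε/∂δ₀` evaluated at `δ₀ = 1/2` is strictly negative. -/
theorem first_partial_limits
    (ε : ℝ) (hε : ε ∈ Set.Ico (0 : ℝ) 1) (k : ℕ) (hk : 1 ≤ k)
    (δ : ℕ → ℝ) (hδ : ∀ i, 1 ≤ i → i < k → δ i ∈ Set.Icc (0 : ℝ) 1) :
    Filter.Tendsto (fun t : ℝ => deriv (fun s : ℝ => Rfun ε k (Function.update δ 0 s)) t)
      (nhdsWithin 0 (Set.Ioi 0)) Filter.atTop ∧
    deriv (fun s : ℝ => Rfun ε k (Function.update δ 0 s)) (1 / 2) < 0 := by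
  obtain ⟨k, rfl⟩ := Nat.exists_eq_add_of_le' hk
  have he : 0 < 1 - ε := sub_pos.mpr hε.2
  have hshift : ∀ i < k, δ (i + 1) ∈ Set.Icc 0 1 := fun i hi => hδ (i + 1) (by omega) (by omega)
  set N := Rnum ε k (fun i => δ (i + 1))
  set D := Rden ε k (fun i => δ (i + 1))
  have hD : 1 ≤ D := one_le_Rden ε he.le fun i hi => (hshift i hi).1
  have hND : N < (1 - ε) * D := Rnum_lt_mul_Rden ε he hshift
  simp only [Rfun_succ_update_zero]
  refine ⟨tendsto_deriv_H2_ratio_nhdsGT_zero _ _ _ he, ?_⟩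
  have hb : 0 < 1 + (1 - ε) * D / 2 := by nlinarith
  rw [deriv_H2_ratio_half _ _ _ hb.ne']
  exact div_neg_of_neg_of_pos (by nlinarith) (by positivity)
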